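/- Domain substitution preserves accessibility: if Ω, ω1 ≺ α, Ω' ⊢ ω ≺* ω' and Ω ⊢ ω1 ≺ ω2, where α is a domain variable not occurring in Ω or ω1, then Ω, Ω'{ω2/α} ⊢ ω{ω2/α} ≺* ω'{ω2/α}. -/

import Mathlib

/-- Domains: constants or variables. -/
inductive Dom where
  | const : String → Dom
  | var : String → Dom
deriving DecidableEq

/-- The reflexive-transitive accessibility judgment Ω ⊢ ω1 ≺* ω2,
where the direct judgment Ω ⊢ ω1 ≺ ω2 holds iff (ω1, ω2) ∈ Ω. -/
inductive AccStar (Ω : Finset (Dom × Dom)) : Dom → Dom → Prop where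
  | refl (w : Dom) : AccStar Ω w w
  | step {w1 w2 w3 : Dom} : (w1, w2) ∈ Ω → AccStar Ω w2 w3 → AccStar Ω w1 w3

/-- Substitution {ω2/α} on domains: replace the variable α by ω2. -/
def substDom (α : String) (ω2 : Dom) (d : Dom) : Dom :=
  if d = Dom.var α then ω2 else d

/-- The variable α occurs in the accessibility context Ω. -/
def OccursIn (α : String) (Ω : Finset (Dom × Dom)) : Prop :=
  ∃ p ∈ Ω, p.1 = Dom.var α ∨ p.2 = Dom.var α

theorem AccStar.map {Ω Δ : Finset (Dom × Dom)} (f : Dom → Dom)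
    (hf : ∀ p ∈ Ω, (f p.1, f p.2) ∈ Δ) {w w' : Dom} (h : AccStar Ω w w') :
    AccStar Δ (f w) (f w') := by
  induction h with
  | refl w => exact .refl _
  | step hmem _ ih => exact .step (hf _ hmem) ih

theorem substDom_of_ne {α : String} {d : Dom} (ω2 : Dom) (h : d ≠ Dom.var α) :
    substDom α ω2 d = d :=
  if_neg h

theorem substDom_var (α : String) (ω2 : Dom) : substDom α ω2 (Dom.var α) = ω2 :=
  if_pos rfl

theorem substDom_pair_eq_self_of_not_occursIn {α : String} {Ω : Finset (Dom × Dom)}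
    (ω2 : Dom) (hα : ¬ OccursIn α Ω) {p : Dom × Dom} (hp : p ∈ Ω) :
    (substDom α ω2 p.1, substDom α ω2 p.2) = p := by
  rw [substDom_of_ne ω2 fun e => hα ⟨p, hp, .inl e⟩,
    substDom_of_ne ω2 fun e => hα ⟨p, hp, .inr e⟩]

/-- domain substitution preserves accessibility:
if Ω, ω1 ≺ α, Ω' ⊢ ω ≺* ω' and Ω ⊢ ω1 ≺ ω2, with α not occurring in Ω or ω1,
then Ω, Ω'{ω2/α} ⊢ ω{ω2/α} ≺* ω'{ω2/α}. -/
theorem accStar_subst (Ω Ω' : Finset (Dom × Dom)) (ω1 ω2 ω ω' : Dom) (α : String)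
    (hα1 : ¬ OccursIn α Ω) (hα2 : ω1 ≠ Dom.var α)
    (h : AccStar (Ω ∪ insert (ω1, Dom.var α) Ω') ω ω')
    (hdir : (ω1, ω2) ∈ Ω) :
    AccStar (Ω ∪ Ω'.image (fun p => (substDom α ω2 p.1, substDom α ω2 p.2)))
      (substDom α ω2 ω) (substDom α ω2 ω') := by
  refine h.map (substDom α ω2) fun p hp => ?_
  rcases Finset.mem_union.1 hp with hΩ | hp'
  · rw [substDom_pair_eq_self_of_not_occursIn ω2 hα1 hΩ]
    exact Finset.mem_union_left _ hΩ
  rcases Finset.mem_insert.1 hp' with rfl | hΩ'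
  · rw [substDom_of_ne ω2 hα2, substDom_var]
    exact Finset.mem_union_left _ hdir
  · exact Finset.mem_union_right _ (Finset.mem_image_of_mem _ hΩ')
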